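/- arXiv:1012.5901 — 2 statements merged into one kernel-verified Lean document; each statement's English description precedes it below -/
import Mathlib

section
/- Theorem 2 (i): Let 1 < p ≤ 2 with conjugate exponent p', let γ satisfy 0 < γ ≤ 2(α+1)/p, and let f belong to the Besov-type space B^{p,∞}_{γ,α} on the Jacobi hypergroup. Then 𝓕(f) ∈ L^s_c(ℝ₊) for every s with 2(α+1)p/(γp + 2(α+1)(p−1)) < s ≤ p'. -/
open MeasureTheory Set Filter

/-- The `L^p` norm on `(0,∞)` with respect to the weighted measure `w(x) dx`. -/
noncomputable def wLpNorm (w : ℝ → ℝ) (p : ℝ) (f : ℝ → ℂ) : ℝ :=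
  (∫ x in Set.Ioi (0 : ℝ), ‖f x‖ ^ p * w x) ^ (1 / p)

/-- Membership in `L^p((0,∞), w(x) dx)`. -/
def MemW (w : ℝ → ℝ) (p : ℝ) (f : ℝ → ℂ) : Prop :=
  AEMeasurable f (volume.restrict (Set.Ioi (0 : ℝ))) ∧
    IntegrableOn (fun x => ‖f x‖ ^ p * w x) (Set.Ioi (0 : ℝ))

/-- The Jacobi hypergroup setting: the Chébli–Trimèche hypergroup `(ℝ₊, ∗(A))` with
`A(x) = 2^(2ρ) (sinh x)^(2α+1) (cosh x)^(2β+1)`, `α ≥ β ≥ -1/2`, `α ≠ -1/2`,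
`ρ = α + β + 1`.  Its characters are the Jacobi functions `φ_λ`, satisfying
`|1 - φ_λ(t)| ≥ c₀ min{1, (λt)²}`.  The density `cden = |c(λ)|⁻²` is even, continuous
and comparable to `|λ|^(2α+1)` for `|λ| > k` and to `|λ|²` for `|λ| ≤ k`.  The
generalized Fourier transform `FT` is given on `L¹_A` by
`𝓕(f)(λ) = ∫₀^∞ f(x) φ_λ(x) A(x) dx`; it satisfies `‖𝓕 f‖_∞ ≤ ‖f‖_{A,1}`, the
Hausdorff–Young inequality, the Hardy–Littlewood inequality of Lemma 1 and the
translation identity `𝓕(τ_δ f)(λ) = φ_λ(δ) 𝓕(f)(λ)`, where the generalized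
translations `τ_δ` are `L^p_A`-contractions. -/
structure JacobiHypergroup where
  α : ℝ
  β : ℝ
  ρ : ℝ
  hβα : β ≤ α
  hβ : -(1/2) ≤ β
  hα : α ≠ -(1/2)
  hρ : ρ = α + β + 1
  /-- the weight function `A` of the Jacobi hypergroup -/
  A : ℝ → ℝ
  hA : ∀ x : ℝ, 0 ≤ x →
    A x = (2 : ℝ) ^ (2 * ρ) * Real.sinh x ^ (2 * α + 1) * Real.cosh x ^ (2 * β + 1)
  /-- the Jacobi functions `φ_λ`, the characters of the hypergroup -/
  φ : ℝ → ℝ → ℂ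
  c₀ : ℝ
  hc₀ : 0 < c₀
  hφ_lower : ∀ lam t : ℝ, 0 < t →
    c₀ * min 1 ((lam * t) ^ 2) ≤ ‖1 - φ lam t‖
  /-- the density `|c(λ)|⁻²` of the Plancherel measure -/
  cden : ℝ → ℝ
  hcden_cont : Continuous cden
  hcden_even : ∀ x : ℝ, cden (-x) = cden x
  k : ℝ
  k₁ : ℝ
  k₂ : ℝ
  hk : 0 < k
  hk₁ : 0 < k₁
  hk₂ : 0 < k₂
  hcden_hi : ∀ x : ℝ, k < |x| →
    k₁ * |x| ^ (2 * α + 1) ≤ cden x ∧ cden x ≤ k₂ * |x| ^ (2 * α + 1)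
  hcden_lo : ∀ x : ℝ, |x| ≤ k →
    k₁ * |x| ^ (2 : ℝ) ≤ cden x ∧ cden x ≤ k₂ * |x| ^ (2 : ℝ)
  /-- the generalized Fourier transform -/
  FT : (ℝ → ℂ) → ℝ → ℂ
  hFT_def : ∀ f : ℝ → ℂ, MemW A 1 f → ∀ lam : ℝ,
    FT f lam = ∫ x in Set.Ioi (0 : ℝ), f x * φ lam x * (A x : ℂ)
  hFT_meas : ∀ f : ℝ → ℂ, Measurable (FT f)
  hFT_sub : ∀ f g : ℝ → ℂ, ∀ lam : ℝ,
    FT (fun y => f y - g y) lam = FT f lam - FT g lam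
  /-- `‖𝓕 f‖_∞ ≤ ‖f‖_{A,1}` -/
  hFT_sup : ∀ f : ℝ → ℂ, MemW A 1 f → ∀ lam : ℝ,
    ‖FT f lam‖ ≤ wLpNorm A 1 f
  /-- the Hausdorff–Young inequality `‖𝓕 f‖_{c,p'} ≤ C ‖f‖_{A,p}` -/
  hHY : ∀ p p' : ℝ, 1 < p → p ≤ 2 → 1 / p + 1 / p' = 1 →
    ∃ C > (0 : ℝ), ∀ f : ℝ → ℂ, MemW A p f →
      (∫⁻ lam in Set.Ioi (0 : ℝ),
          ENNReal.ofReal (‖FT f lam‖ ^ p' * cden lam)) ^ (1 / p')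
        ≤ ENNReal.ofReal (C * wLpNorm A p f)
  /-- the Hardy–Littlewood inequality of Lemma 1 (with the piecewise weight
  `g(t) = t³` for `t ≤ k`, `g(t) = t^(2(α+1))` for `t > k`) -/
  hHL : ∀ p : ℝ, 1 < p → p ≤ 2 →
    ∃ C > (0 : ℝ), ∀ f : ℝ → ℂ, MemW A p f →
      ∫⁻ x in Set.Ioi (0 : ℝ),
          ENNReal.ofReal ((if x ≤ k then x ^ (3 : ℝ) else x ^ (2 * (α + 1))) ^ (p - 2) *
            ‖FT f x‖ ^ p * cden x)
        ≤ ENNReal.ofReal (C * wLpNorm A p f ^ p)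
  /-- the generalized translation operators -/
  τ : ℝ → (ℝ → ℂ) → ℝ → ℂ
  hτ_contract : ∀ p : ℝ, 1 ≤ p → ∀ (δ : ℝ) (f : ℝ → ℂ), MemW A p f →
    MemW A p (τ δ f) ∧ wLpNorm A p (τ δ f) ≤ wLpNorm A p f
  hτ_diff : ∀ p : ℝ, 1 ≤ p → ∀ (δ : ℝ) (f : ℝ → ℂ), MemW A p f →
    MemW A p (fun y => τ δ f y - f y)
  /-- the translation identity `𝓕(τ_δ f)(λ) = φ_λ(δ) 𝓕(f)(λ)` -/
  hτ_FT : ∀ p : ℝ, 1 ≤ p → p ≤ 2 → ∀ (δ : ℝ) (f : ℝ → ℂ), MemW A p f →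
    ∀ᵐ lam ∂(volume.restrict (Set.Ioi (0 : ℝ))),
      FT (τ δ f) lam = φ lam δ * FT f lam

/-- The modulus of continuity of first order, `ω_{A,p}(f)(δ) = ‖τ_δ f - f‖_{A,p}`. -/
noncomputable def JacobiHypergroup.omega (S : JacobiHypergroup) (p : ℝ)
    (f : ℝ → ℂ) (δ : ℝ) : ℝ :=
  wLpNorm S.A p (fun y => S.τ δ f y - f y)

open scoped ENNReal

/-! Hausdorff–Young applied to `τ_δ f - f`, together with `|1 - φ_λ(δ)| ≥ c₀` for `λδ ≥ 1`, gives
`∫_{λ ≥ r} |𝓕f|^{p'} dλ/|c(λ)|² ≲ ω_{A,p}(f)(1/r)^{p'} ≲ r^{-γp'}`. On a dyadic block `[r, 2r)`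
with `r > k`, Hölder's inequality with exponent `p'/s` and `|c(λ)|^{-2} ≲ r^{2α+1}` give
`∫_{[r,2r)} |𝓕f|^s dλ/|c(λ)|² ≲ r^{(2α+2)(1 - s/p') - γs}`. The lower bound on `s` is exactly what
makes this exponent negative, so the blocks sum geometrically; on the bounded part `(0, k+1)`,
Hölder and the finiteness of `∫ |𝓕f|^{p'} dλ/|c(λ)|²` suffice. -/

theorem lintegral_enorm_rpow_le_mul_measure_univ {α E : Type*} [MeasurableSpace α]
    [NormedAddCommGroup E] {μ : Measure α} {f : α → E} {s t : ℝ} (hs : 0 < s) (hst : s ≤ t)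
    (hf : AEStronglyMeasurable f μ) :
    ∫⁻ x, ‖f x‖ₑ ^ s ∂μ ≤ (∫⁻ x, ‖f x‖ₑ ^ t ∂μ) ^ (s / t) * μ univ ^ (1 - s / t) := by
  have ht : 0 < t := hs.trans_le hst
  have h := ENNReal.rpow_le_rpow (eLpNorm'_le_eLpNorm'_mul_rpow_measure_univ hs hst hf) hs.le
  rw [ENNReal.mul_rpow_of_nonneg _ _ hs.le] at h
  simp only [eLpNorm', ← ENNReal.rpow_mul] at h
  rwa [one_div_mul_cancel hs.ne', ENNReal.rpow_one, one_div_mul_eq_div,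
    sub_mul, one_div_mul_cancel hs.ne', one_div_mul_eq_div] at h

theorem setLIntegral_enorm_rpow_lt_top {α E : Type*} [MeasurableSpace α] [NormedAddCommGroup E]
    {μ : Measure α} {f : α → E} {s t : ℝ} (hs : 0 < s) (hst : s ≤ t)
    (hf : AEStronglyMeasurable f μ) (hft : ∫⁻ x, ‖f x‖ₑ ^ t ∂μ ≠ ⊤) {A : Set α} (hA : μ A ≠ ⊤) :
    ∫⁻ x in A, ‖f x‖ₑ ^ s ∂μ < ⊤ := by
  have hθ : 0 ≤ 1 - s / t := sub_nonneg.2 ((div_le_one (hs.trans_le hst)).2 hst)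
  refine (lintegral_enorm_rpow_le_mul_measure_univ hs hst hf.restrict).trans_lt
    (ENNReal.mul_lt_top ?_ ?_)
  · exact ENNReal.rpow_lt_top_of_nonneg (div_nonneg hs.le (hs.le.trans hst))
      (ne_top_of_le_ne_top hft (setLIntegral_le_lintegral _ _))
  · rw [Measure.restrict_apply_univ]
    exact ENNReal.rpow_lt_top_of_nonneg hθ hA

theorem setLIntegral_Ici_lt_top_of_dyadic {μ : Measure ℝ} {f : ℝ → ℝ≥0∞} {m C E : ℝ}
    (hm : 0 < m) (hE : E < 0)
    (hblock : ∀ r, m ≤ r → ∫⁻ x in Ico r (2 * r), f x ∂μ ≤ ENNReal.ofReal (C * r ^ E)) :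
    ∫⁻ x in Ici m, f x ∂μ < ⊤ := by
  have hcover : Ici m ⊆ ⋃ n : ℕ, Ico (m * 2 ^ n) (2 * (m * 2 ^ n)) := by
    intro x hx
    obtain ⟨n, hn, hn'⟩ := exists_nat_pow_near ((one_le_div hm).2 hx) one_lt_two
    refine mem_iUnion.2 ⟨n, ?_, ?_⟩
    · rwa [le_div_iff₀ hm, mul_comm] at hn
    · rw [div_lt_iff₀ hm, pow_succ] at hn'
      exact hn'.trans_eq (by ring)
  have hgeom : ∀ n : ℕ, (m * 2 ^ n) ^ E = m ^ E * ((2 : ℝ) ^ E) ^ n := fun n => by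
    rw [Real.mul_rpow hm.le (by positivity), ← Real.rpow_natCast, ← Real.rpow_natCast,
      ← Real.rpow_mul zero_le_two, ← Real.rpow_mul zero_le_two, mul_comm E]
  calc ∫⁻ x in Ici m, f x ∂μ
      ≤ ∑' n : ℕ, ∫⁻ x in Ico (m * 2 ^ n) (2 * (m * 2 ^ n)), f x ∂μ :=
        (lintegral_mono_set hcover).trans (lintegral_iUnion_le _ _)
    _ ≤ ∑' n : ℕ, ENNReal.ofReal (C * m ^ E) * ENNReal.ofReal (2 ^ E) ^ n := by
        refine ENNReal.tsum_le_tsum fun n => (hblock _ ?_).trans_eq ?_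
        · exact le_mul_of_one_le_right hm.le (one_le_pow₀ one_le_two)
        · rw [hgeom, ← mul_assoc, ENNReal.ofReal_mul', ENNReal.ofReal_pow (by positivity)]
          positivity
    _ < ⊤ := by
        rw [ENNReal.tsum_mul_left, ENNReal.tsum_geometric]
        refine ENNReal.mul_lt_top ENNReal.ofReal_lt_top (ENNReal.inv_lt_top.2 (tsub_pos_of_lt ?_))
        exact ENNReal.ofReal_lt_one.2 (Real.rpow_lt_one_of_one_lt_of_neg one_lt_two hE)

theorem Real.HolderConjugate.pos_and_exponent_neg {p p' a γ s : ℝ} (hpq : p.HolderConjugate p')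
    (ha : 0 < a) (hγ : 0 < γ) (hs : a * p / (γ * p + a * (p - 1)) < s) :
    0 < s ∧ a * (1 - s / p') - γ * s < 0 := by
  have hD : 0 < γ * p + a * (p - 1) := by
    have := mul_pos ha hpq.sub_one_pos
    have := hpq.pos
    positivity
  have hsD := (div_lt_iff₀ hD).1 hs
  have hEp : (a * (1 - s / p') - γ * s) * p = a * p - s * (γ * p + a * (p - 1)) := by
    rw [hpq.conjugate_eq]
    field_simp [hpq.sub_one_ne_zero, hpq.pos.ne']
    ring
  refine ⟨(div_pos (mul_pos ha hpq.pos) hD).trans hs, ?_⟩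
  nlinarith [hpq.pos]

namespace JacobiHypergroup

variable (S : JacobiHypergroup)

/-- The measure `dλ / |c(λ)|²` on `ℝ₊`, so that `L^s_c(ℝ₊) = L^s(S.plancherel)`. -/
noncomputable def plancherel : Measure ℝ :=
  (volume.restrict (Ioi 0)).withDensity fun x => ENNReal.ofReal (S.cden x)

instance : IsLocallyFiniteMeasure S.plancherel :=
  .withDensity_ofReal S.hcden_cont

theorem plancherel_restrict_Ioi : S.plancherel.restrict (Ioi 0) = S.plancherel :=
  Measure.restrict_eq_self_of_ae_mem <|
    (withDensity_absolutelyContinuous _ _).ae_le (ae_restrict_mem measurableSet_Ioi)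

theorem setLIntegral_ofReal_rpow_mul_cden (g : ℝ → ℂ) {t : ℝ} (ht : 0 ≤ t) :
    ∫⁻ x in Ioi 0, ENNReal.ofReal (‖g x‖ ^ t * S.cden x) = ∫⁻ x, ‖g x‖ₑ ^ t ∂S.plancherel := by
  rw [plancherel, lintegral_withDensity_eq_lintegral_mul_non_measurable _
    S.hcden_cont.measurable.ennreal_ofReal (ae_of_all _ fun _ => ENNReal.ofReal_lt_top)]
  refine lintegral_congr fun x => ?_
  rw [Pi.mul_apply, ENNReal.ofReal_mul (by positivity), ← ofReal_norm,
    ENNReal.ofReal_rpow_of_nonneg (norm_nonneg _) ht, mul_comm]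

theorem plancherel_Ico_le {r : ℝ} (hr : S.k < r) :
    S.plancherel (Ico r (2 * r)) ≤
      ENNReal.ofReal (S.k₂ * 2 ^ (2 * S.α + 1) * r ^ (2 * (S.α + 1))) := by
  have hα : 0 ≤ 2 * S.α + 1 := by linarith [S.hβα, S.hβ]
  have hr0 : 0 < r := S.hk.trans hr
  have hcden : ∀ x ∈ Ico r (2 * r),
      ENNReal.ofReal (S.cden x) ≤ ENNReal.ofReal (S.k₂ * (2 * r) ^ (2 * S.α + 1)) := by
    intro x hx
    have hx0 : 0 < x := hr0.trans_le hx.1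
    refine ENNReal.ofReal_le_ofReal ((S.hcden_hi x ?_).2.trans ?_) <;> rw [abs_of_pos hx0]
    · exact hr.trans_le hx.1
    · exact mul_le_mul_of_nonneg_left (Real.rpow_le_rpow hx0.le hx.2.le hα) S.hk₂.le
  calc S.plancherel (Ico r (2 * r))
      ≤ ∫⁻ x in Ico r (2 * r), ENNReal.ofReal (S.cden x) := by
        rw [plancherel, withDensity_apply _ measurableSet_Ico]
        exact lintegral_mono' (Measure.restrict_mono subset_rfl Measure.restrict_le_self) le_rfl
    _ ≤ ∫⁻ _ in Ico r (2 * r), ENNReal.ofReal (S.k₂ * (2 * r) ^ (2 * S.α + 1)) :=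
        setLIntegral_mono' measurableSet_Ico hcden
    _ = _ := by
        rw [setLIntegral_const, Real.volume_Ico,
          ← ENNReal.ofReal_mul (mul_nonneg S.hk₂.le (by positivity))]
        congr 1
        rw [Real.mul_rpow zero_le_two hr0.le, show 2 * (S.α + 1) = 2 * S.α + 1 + 1 by ring,
          Real.rpow_add_one hr0.ne' (2 * S.α + 1)]
        ring

def HausdorffYoungBound (p p' C : ℝ) : Prop :=
  ∀ g : ℝ → ℂ, MemW S.A p g →
    ∫⁻ x, ‖S.FT g x‖ₑ ^ p' ∂S.plancherel ≤ ENNReal.ofReal (C * wLpNorm S.A p g) ^ p'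

theorem exists_hausdorffYoungBound {p p' : ℝ} (hp : 1 < p) (hp2 : p ≤ 2)
    (hpp' : 1 / p + 1 / p' = 1) : ∃ C > (0 : ℝ), S.HausdorffYoungBound p p' C := by
  have hp' : 0 < p' :=
    (Real.holderConjugate_iff.2 ⟨hp, by simpa only [one_div] using hpp'⟩).symm.pos
  obtain ⟨C, hC, hHY⟩ := S.hHY p p' hp hp2 hpp'
  refine ⟨C, hC, fun g hg => ?_⟩
  have h := ENNReal.rpow_le_rpow (hHY g hg) hp'.le
  rwa [← ENNReal.rpow_mul, one_div_mul_cancel hp'.ne', ENNReal.rpow_one,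
    S.setLIntegral_ofReal_rpow_mul_cden _ hp'.le] at h

theorem enorm_FT_le_of_one_le_mul {p : ℝ} (hp : 1 ≤ p) (hp2 : p ≤ 2) {f : ℝ → ℂ}
    (hf : MemW S.A p f) {δ : ℝ} (hδ : 0 < δ) :
    ∀ᵐ lam ∂S.plancherel, 1 ≤ lam * δ →
      ‖S.FT f lam‖ₑ ≤ ENNReal.ofReal S.c₀⁻¹ * ‖S.FT (fun y => S.τ δ f y - f y) lam‖ₑ := by
  filter_upwards [(withDensity_absolutelyContinuous _ _).ae_le (S.hτ_FT p hp hp2 δ f hf)]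
    with lam hlam hlamδ
  have hφ : S.c₀ ≤ ‖1 - S.φ lam δ‖ := by
    simpa [min_eq_left (one_le_pow₀ hlamδ)] using S.hφ_lower lam δ hδ
  have hnorm : ‖S.FT (fun y => S.τ δ f y - f y) lam‖ = ‖1 - S.φ lam δ‖ * ‖S.FT f lam‖ := by
    rw [S.hFT_sub, hlam, ← norm_mul, ← norm_neg]
    ring_nf
  have h : ‖S.FT f lam‖ ≤ S.c₀⁻¹ * ‖S.FT (fun y => S.τ δ f y - f y) lam‖ := by
    rw [le_inv_mul_iff₀ S.hc₀, hnorm]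
    exact mul_le_mul_of_nonneg_right hφ (norm_nonneg _)
  rw [← ofReal_norm, ← ofReal_norm, ← ENNReal.ofReal_mul (inv_nonneg.2 S.hc₀.le)]
  exact ENNReal.ofReal_le_ofReal h

theorem setLIntegral_Ici_FT_rpow_le {p p' C B γ r : ℝ} (hp : 1 ≤ p) (hp2 : p ≤ 2) (hp' : 0 < p')
    (hC : 0 ≤ C) (hHY : S.HausdorffYoungBound p p' C) {f : ℝ → ℂ} (hf : MemW S.A p f)
    (hB : ∀ x > (0 : ℝ), S.omega p f x ≤ B * x ^ γ) (hr : 0 < r) :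
    ∫⁻ lam in Ici r, ‖S.FT f lam‖ₑ ^ p' ∂S.plancherel ≤
      ENNReal.ofReal (S.c₀⁻¹ * C * B * r ^ (-γ)) ^ p' := by
  set g := fun y => S.τ r⁻¹ f y - f y
  have hc₀ : 0 ≤ S.c₀⁻¹ := inv_nonneg.2 S.hc₀.le
  have hω : S.omega p f r⁻¹ ≤ B * r ^ (-γ) := by
    simpa only [Real.rpow_neg hr.le, Real.inv_rpow hr.le] using hB _ (inv_pos.2 hr)
  calc ∫⁻ lam in Ici r, ‖S.FT f lam‖ₑ ^ p' ∂S.plancherel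
      ≤ ∫⁻ lam in Ici r, ENNReal.ofReal S.c₀⁻¹ ^ p' * ‖S.FT g lam‖ₑ ^ p' ∂S.plancherel := by
        refine setLIntegral_mono_ae' measurableSet_Ici ?_
        filter_upwards [S.enorm_FT_le_of_one_le_mul hp hp2 hf (inv_pos.2 hr)] with lam h hlam
        rw [← ENNReal.mul_rpow_of_nonneg _ _ hp'.le]
        refine ENNReal.rpow_le_rpow (h ?_) hp'.le
        rwa [← div_eq_mul_inv, one_le_div hr]
    _ ≤ ENNReal.ofReal S.c₀⁻¹ ^ p' * ∫⁻ lam, ‖S.FT g lam‖ₑ ^ p' ∂S.plancherel := by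
        rw [lintegral_const_mul' _ _ (ENNReal.rpow_ne_top_of_nonneg hp'.le ENNReal.ofReal_ne_top)]
        gcongr
        exact Measure.restrict_le_self
    _ ≤ ENNReal.ofReal S.c₀⁻¹ ^ p' * ENNReal.ofReal (C * S.omega p f r⁻¹) ^ p' := by
        gcongr
        exact hHY g (S.hτ_diff p hp r⁻¹ f hf)
    _ ≤ _ := by
        rw [← ENNReal.mul_rpow_of_nonneg _ _ hp'.le, ← ENNReal.ofReal_mul hc₀]
        refine ENNReal.rpow_le_rpow (ENNReal.ofReal_le_ofReal ?_) hp'.le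
        calc S.c₀⁻¹ * (C * S.omega p f r⁻¹) ≤ S.c₀⁻¹ * (C * (B * r ^ (-γ))) := by gcongr
          _ = S.c₀⁻¹ * C * B * r ^ (-γ) := by ring

theorem setLIntegral_Ico_rpow_le {F : ℝ → ℂ} (hF : AEStronglyMeasurable F S.plancherel)
    {s t K γ r : ℝ} (hs : 0 < s) (hst : s ≤ t) (hK : 0 ≤ K) (hr : S.k < r)
    (htail : ∫⁻ x in Ici r, ‖F x‖ₑ ^ t ∂S.plancherel ≤ ENNReal.ofReal (K * r ^ (-γ)) ^ t) :
    ∫⁻ x in Ico r (2 * r), ‖F x‖ₑ ^ s ∂S.plancherel ≤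
      ENNReal.ofReal (K ^ s * (S.k₂ * 2 ^ (2 * S.α + 1)) ^ (1 - s / t) *
        r ^ (2 * (S.α + 1) * (1 - s / t) - γ * s)) := by
  have ht : 0 < t := hs.trans_le hst
  have hθ : 0 ≤ 1 - s / t := sub_nonneg.2 ((div_le_one ht).2 hst)
  have hr0 : 0 < r := S.hk.trans hr
  have hM : 0 ≤ S.k₂ * 2 ^ (2 * S.α + 1) := mul_nonneg S.hk₂.le (by positivity)
  calc ∫⁻ x in Ico r (2 * r), ‖F x‖ₑ ^ s ∂S.plancherel
      ≤ (∫⁻ x in Ico r (2 * r), ‖F x‖ₑ ^ t ∂S.plancherel) ^ (s / t) *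
          S.plancherel (Ico r (2 * r)) ^ (1 - s / t) := by
        simpa only [Measure.restrict_apply_univ] using
          lintegral_enorm_rpow_le_mul_measure_univ hs hst hF.restrict
    _ ≤ (ENNReal.ofReal (K * r ^ (-γ)) ^ t) ^ (s / t) *
          ENNReal.ofReal (S.k₂ * 2 ^ (2 * S.α + 1) * r ^ (2 * (S.α + 1))) ^ (1 - s / t) := by
        gcongr
        · exact (lintegral_mono_set Ico_subset_Ici_self).trans htail
        · exact S.plancherel_Ico_le hr
    _ = _ := by
        rw [← ENNReal.rpow_mul, mul_div_cancel₀ _ ht.ne',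
          ENNReal.ofReal_rpow_of_nonneg (by positivity) hs.le,
          ENNReal.ofReal_rpow_of_nonneg (by positivity) hθ, ← ENNReal.ofReal_mul (by positivity)]
        congr 1
        rw [Real.mul_rpow hK (by positivity), Real.mul_rpow hM (by positivity),
          ← Real.rpow_mul hr0.le, ← Real.rpow_mul hr0.le,
          show 2 * (S.α + 1) * (1 - s / t) - γ * s = 2 * (S.α + 1) * (1 - s / t) + -γ * s by ring,
          Real.rpow_add hr0]
        ring

end JacobiHypergroup

theorem theorem_two_i_general (S : JacobiHypergroup) (p p' : ℝ) (hp : 1 < p) (hp2 : p ≤ 2)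
    (hpp' : 1 / p + 1 / p' = 1) (γ : ℝ) (hγ : 0 < γ)
    (f : ℝ → ℂ) (hf : MemW S.A p f)
    (hBesov : ∃ C : ℝ, ∀ x > (0 : ℝ), S.omega p f x ≤ C * x ^ γ)
    (s : ℝ) (hs1 : 2 * (S.α + 1) * p / (γ * p + 2 * (S.α + 1) * (p - 1)) < s)
    (hs2 : s ≤ p') :
    ∫⁻ x in Set.Ioi (0 : ℝ),
        ENNReal.ofReal (‖S.FT f x‖ ^ s * S.cden x) < ⊤ := by
  have hpq : p.HolderConjugate p' :=
    Real.holderConjugate_iff.2 ⟨hp, by simpa only [one_div] using hpp'⟩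
  obtain ⟨hs, hE⟩ := hpq.pos_and_exponent_neg (by linarith [S.hβα, S.hβ]) hγ hs1
  obtain ⟨C, hC, hHY⟩ := S.exists_hausdorffYoungBound hp hp2 hpp'
  obtain ⟨B, hB⟩ := hBesov
  have hB' : ∀ x > (0 : ℝ), S.omega p f x ≤ max B 0 * x ^ γ := fun x hx =>
    (hB x hx).trans (mul_le_mul_of_nonneg_right (le_max_left _ _) (by positivity))
  have hK : 0 ≤ S.c₀⁻¹ * C * max B 0 :=
    mul_nonneg (mul_nonneg (inv_nonneg.2 S.hc₀.le) hC.le) (le_max_right _ _)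
  have hF : AEStronglyMeasurable (S.FT f) S.plancherel := (S.hFT_meas f).aestronglyMeasurable
  have hm : 0 < S.k + 1 := by linarith [S.hk]
  have hnear : ∫⁻ x in Ioo 0 (S.k + 1), ‖S.FT f x‖ₑ ^ s ∂S.plancherel < ⊤ :=
    setLIntegral_enorm_rpow_lt_top hs hs2 hF
      (ne_top_of_le_ne_top (ENNReal.rpow_ne_top_of_nonneg hpq.symm.nonneg ENNReal.ofReal_ne_top)
        (hHY f hf)) measure_Ioo_lt_top.ne
  have hfar : ∫⁻ x in Ici (S.k + 1), ‖S.FT f x‖ₑ ^ s ∂S.plancherel < ⊤ :=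
    setLIntegral_Ici_lt_top_of_dyadic hm hE fun r hr =>
      S.setLIntegral_Ico_rpow_le hF hs hs2 hK (by linarith) <|
        S.setLIntegral_Ici_FT_rpow_le hp.le hp2 hpq.symm.pos hC.le hHY hf hB' (hm.trans_le hr)
  rw [S.setLIntegral_ofReal_rpow_mul_cden _ hs.le, ← S.plancherel_restrict_Ioi,
    ← Ioo_union_Ici_eq_Ioi hm]
  exact (lintegral_union_le _ _ _).trans_lt (ENNReal.add_lt_top.2 ⟨hnear, hfar⟩)

/-- **Theorem 2 (i)**: let `1 < p ≤ 2` with conjugate exponent `p'`, let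
`0 < γ ≤ 2(α+1)/p`, and let `f` belong to the Besov-type space `B^{p,∞}_{γ,α}` on
the Jacobi hypergroup (i.e. `f ∈ L^p_A(ℝ₊)` with `sup_{x>0} ω_{A,p}(f)(x)/x^γ < ∞`).
Then `𝓕(f) ∈ L^s_c(ℝ₊)` for every `s` with
`2(α+1)p/(γp + 2(α+1)(p-1)) < s ≤ p'`. -/
theorem theorem_two_i (S : JacobiHypergroup) (p p' : ℝ) (hp : 1 < p) (hp2 : p ≤ 2)
    (hpp' : 1 / p + 1 / p' = 1) (γ : ℝ) (hγ : 0 < γ) (hγ2 : γ ≤ 2 * (S.α + 1) / p)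
    (f : ℝ → ℂ) (hf : MemW S.A p f)
    (hBesov : ∃ C : ℝ, ∀ x > (0 : ℝ), S.omega p f x ≤ C * x ^ γ)
    (s : ℝ) (hs1 : 2 * (S.α + 1) * p / (γ * p + 2 * (S.α + 1) * (p - 1)) < s)
    (hs2 : s ≤ p') :
    ∫⁻ x in Set.Ioi (0 : ℝ),
        ENNReal.ofReal (‖S.FT f x‖ ^ s * S.cden x) < ⊤ :=
  theorem_two_i_general S p p' hp hp2 hpp' γ hγ f hf hBesov s hs1 hs2
end

section
/- Theorem 2 (ii): Let 1 < p ≤ 2, let γ > 2(α+1)/p, and let f belong to the Besov-type space B^{p,∞}_{γ,α} on the Jacobi hypergroup. Then 𝓕(f) ∈ L¹_c(ℝ₊), i.e. ∫₀^∞ |𝓕(f)(x)| dx/|c(x)|² < ∞. -/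
/-!
Split `(0, ∞)` at `k`. On `(0, k]` the density `|c(λ)|⁻²` is integrable, so Hölder's inequality
against the Hausdorff–Young bound already gives a finite integral. A block `(a, 2a]` with `a ≥ k`
is handled with the translation `t = 1/a`: there `λt > 1`, so `|1 - φ_λ(t)| ≥ c₀` and
`|𝓕 f| ≤ c₀⁻¹ |𝓕(τ_t f - f)|`. Hölder and Hausdorff–Young then bound the block by
`ω_{A,p}(f)(1/a) (∫_a^{2a} |c(λ)|⁻² dλ)^{1/p} ≲ a^{2(α+1)/p - γ}`, which is summable over the
dyadic blocks `a = 2ʲ k` exactly because `γ > 2(α+1)/p`.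
-/

open MeasureTheory Set Filter

open scoped ENNReal

theorem lintegral_mul_le_Lp_mul_weight {α : Type*} [MeasurableSpace α] (μ : Measure α)
    {p q : ℝ} (hpq : p.HolderConjugate q) {f w : α → ℝ≥0∞} (hf : Measurable f)
    (hw : Measurable w) :
    ∫⁻ a, f a * w a ∂μ ≤
      (∫⁻ a, f a ^ p * w a ∂μ) ^ (1 / p) * (∫⁻ a, w a ∂μ) ^ (1 / q) := by
  have h := ENNReal.lintegral_mul_le_Lp_mul_Lq (μ.withDensity w) hpq hf.aemeasurable
    (aemeasurable_const (b := (1 : ℝ≥0∞)))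
  simp only [Pi.mul_apply, mul_one, ENNReal.one_rpow] at h
  rw [lintegral_withDensity_eq_lintegral_mul _ hw hf,
    lintegral_withDensity_eq_lintegral_mul _ hw (hf.pow_const p), lintegral_one,
    withDensity_apply _ MeasurableSet.univ, Measure.restrict_univ] at h
  simpa only [Pi.mul_apply, mul_comm (w _)] using h

theorem Ioi_subset_iUnion_Ioc_two_pow {a : ℝ} (ha : 0 < a) :
    Ioi a ⊆ ⋃ j : ℕ, Ioc (a * 2 ^ j) (2 * (a * 2 ^ j)) := by
  intro x hx
  have hxa : 1 < x / a := (one_lt_div ha).2 hx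
  obtain ⟨n, hn⟩ := exists_mem_Ioc_zpow (zero_lt_one.trans hxa) one_lt_two
  lift n to ℕ using by
    by_contra! hneg
    exact (zpow_le_one_of_nonpos₀ one_le_two (by omega)).not_gt (hxa.trans_le hn.2)
  rw [zpow_natCast, ← Nat.cast_succ, zpow_natCast, pow_succ] at hn
  obtain ⟨hlo, hhi⟩ := hn
  rw [lt_div_iff₀ ha] at hlo
  rw [div_le_iff₀ ha] at hhi
  exact mem_iUnion.2 ⟨n, by linarith, by linarith⟩

theorem lintegral_Ioi_lt_top_of_dyadic_bound {g : ℝ → ℝ≥0∞} {a E s : ℝ} (ha : 0 < a)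
    (hs : s < 0)
    (hg : ∀ x, a ≤ x → ∫⁻ y in Ioc x (2 * x), g y ≤ ENNReal.ofReal (E * x ^ s)) :
    ∫⁻ y in Ioi a, g y < ∞ := by
  have hblock : ∀ j : ℕ, E * (a * 2 ^ j) ^ s = E * a ^ s * (2 ^ s) ^ j := by
    intro j
    rw [Real.mul_rpow ha.le (by positivity), ← Real.rpow_natCast, ← Real.rpow_mul zero_le_two,
      mul_comm (j : ℝ), Real.rpow_mul zero_le_two, Real.rpow_natCast, mul_assoc]
  calc ∫⁻ y in Ioi a, g y
      ≤ ∫⁻ y in ⋃ j : ℕ, Ioc (a * 2 ^ j) (2 * (a * 2 ^ j)), g y :=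
        lintegral_mono_set (Ioi_subset_iUnion_Ioc_two_pow ha)
    _ ≤ ∑' j : ℕ, ∫⁻ y in Ioc (a * 2 ^ j) (2 * (a * 2 ^ j)), g y :=
        lintegral_iUnion_le _ _
    _ ≤ ∑' j : ℕ, ENNReal.ofReal (E * a ^ s) * ENNReal.ofReal (2 ^ s) ^ j := by
      refine ENNReal.tsum_le_tsum fun j => (hg _ ?_).trans_eq ?_
      · exact le_mul_of_one_le_right ha.le (one_le_pow₀ one_le_two)
      · rw [hblock, ENNReal.ofReal_mul' (by positivity), ENNReal.ofReal_pow (by positivity)]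
    _ = ENNReal.ofReal (E * a ^ s) * (1 - ENNReal.ofReal (2 ^ s))⁻¹ := by
      rw [ENNReal.tsum_mul_left, ENNReal.tsum_geometric]
    _ < ∞ := ENNReal.mul_lt_top ENNReal.ofReal_lt_top <| ENNReal.inv_lt_top.2 <|
      tsub_pos_iff_lt.2 <|
      ENNReal.ofReal_lt_one.2 (Real.rpow_lt_one_of_one_lt_of_neg one_lt_two hs)

namespace JacobiHypergroup

variable (S : JacobiHypergroup)

lemma cden_nonneg (x : ℝ) : 0 ≤ S.cden x := by
  rcases le_or_gt |x| S.k with h | h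
  · exact (mul_nonneg S.hk₁.le (Real.rpow_nonneg (abs_nonneg x) _)).trans (S.hcden_lo x h).1
  · exact (mul_nonneg S.hk₁.le (Real.rpow_nonneg (abs_nonneg x) _)).trans (S.hcden_hi x h).1

lemma lintegral_Ioc_cden_lt_top (a b : ℝ) :
    ∫⁻ x in Ioc a b, ENNReal.ofReal (S.cden x) < ∞ :=
  (S.hcden_cont.integrableOn_Icc.mono_set Ioc_subset_Icc_self).lintegral_lt_top

lemma lintegral_Ioc_cden_le {a : ℝ} (ha : S.k ≤ a) :
    ∫⁻ x in Ioc a (2 * a), ENNReal.ofReal (S.cden x)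
      ≤ ENNReal.ofReal (S.k₂ * 2 ^ (2 * S.α + 1) * a ^ (2 * (S.α + 1))) := by
  have ha0 : 0 < a := S.hk.trans_le ha
  have hexp : 0 ≤ 2 * S.α + 1 := by linarith [S.hβα, S.hβ]
  have hbound : ∀ x ∈ Ioc a (2 * a), S.cden x ≤ S.k₂ * (2 * a) ^ (2 * S.α + 1) := by
    intro x hx
    have hx0 : 0 < x := ha0.trans hx.1
    have hcden := (S.hcden_hi x (by rw [abs_of_pos hx0]; linarith [hx.1])).2
    rw [abs_of_pos hx0] at hcden
    exact hcden.trans (mul_le_mul_of_nonneg_left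
      (Real.rpow_le_rpow hx0.le hx.2 hexp) S.hk₂.le)
  calc ∫⁻ x in Ioc a (2 * a), ENNReal.ofReal (S.cden x)
      ≤ ∫⁻ _ in Ioc a (2 * a), ENNReal.ofReal (S.k₂ * (2 * a) ^ (2 * S.α + 1)) :=
        setLIntegral_mono measurable_const fun x hx => ENNReal.ofReal_le_ofReal (hbound x hx)
    _ = ENNReal.ofReal (S.k₂ * 2 ^ (2 * S.α + 1) * a ^ (2 * (S.α + 1))) := by
        rw [setLIntegral_const, Real.volume_Ioc,
          ← ENNReal.ofReal_mul (mul_nonneg S.hk₂.le (by positivity)),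
          Real.mul_rpow zero_le_two ha0.le, show 2 * (S.α + 1) = 2 * S.α + 1 + 1 by ring,
          Real.rpow_add_one ha0.ne' (2 * S.α + 1)]
        congr 1
        ring

lemma exists_lintegral_norm_FT_mul_cden_le {p : ℝ} (hp : 1 < p) (hp2 : p ≤ 2) :
    ∃ C > 0, ∀ g : ℝ → ℂ, MemW S.A p g → ∀ I ⊆ Ioi (0 : ℝ),
      ∫⁻ x in I, ENNReal.ofReal (‖S.FT g x‖ * S.cden x)
        ≤ ENNReal.ofReal (C * wLpNorm S.A p g) *
          (∫⁻ x in I, ENNReal.ofReal (S.cden x)) ^ (1 / p) := by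
  set q := Real.conjExponent p
  have hpq : p.HolderConjugate q := .conjExponent hp
  obtain ⟨C, hC, hHY⟩ := S.hHY p q hp hp2 (by simpa using hpq.one_div_add_one_div)
  refine ⟨C, hC, fun g hg I hI => ?_⟩
  have hF : Measurable fun x => ENNReal.ofReal ‖S.FT g x‖ :=
    (S.hFT_meas g).norm.ennreal_ofReal
  calc ∫⁻ x in I, ENNReal.ofReal (‖S.FT g x‖ * S.cden x)
      = ∫⁻ x in I, ENNReal.ofReal ‖S.FT g x‖ * ENNReal.ofReal (S.cden x) := by
        simp_rw [ENNReal.ofReal_mul (norm_nonneg _)]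
    _ ≤ (∫⁻ x in I, ENNReal.ofReal ‖S.FT g x‖ ^ q * ENNReal.ofReal (S.cden x)) ^ (1 / q) *
          (∫⁻ x in I, ENNReal.ofReal (S.cden x)) ^ (1 / p) :=
        lintegral_mul_le_Lp_mul_weight _ hpq.symm hF S.hcden_cont.measurable.ennreal_ofReal
    _ ≤ ENNReal.ofReal (C * wLpNorm S.A p g) *
          (∫⁻ x in I, ENNReal.ofReal (S.cden x)) ^ (1 / p) := by
        gcongr
        refine le_trans ?_ (hHY g hg)
        have hq : 0 ≤ q := hpq.symm.nonneg
        simp_rw [ENNReal.ofReal_rpow_of_nonneg (norm_nonneg _) hq,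
          ← ENNReal.ofReal_mul (Real.rpow_nonneg (norm_nonneg _) _)]
        gcongr

lemma c₀_mul_norm_FT_le_norm_FT_translate_sub {f : ℝ → ℂ} {lam t : ℝ} (ht : 0 < t)
    (hlt : 1 ≤ lam * t) (hτ : S.FT (S.τ t f) lam = S.φ lam t * S.FT f lam) :
    S.c₀ * ‖S.FT f lam‖ ≤ ‖S.FT (fun y => S.τ t f y - f y) lam‖ := by
  have hφ : S.c₀ ≤ ‖1 - S.φ lam t‖ := by
    simpa [min_eq_left (one_le_pow₀ hlt)] using S.hφ_lower lam t ht
  calc S.c₀ * ‖S.FT f lam‖ ≤ ‖1 - S.φ lam t‖ * ‖S.FT f lam‖ := by gcongr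
    _ = ‖S.FT (fun y => S.τ t f y - f y) lam‖ := by
        rw [S.hFT_sub, hτ, ← norm_mul, ← norm_neg]
        congr 1
        ring

lemma lintegral_norm_FT_mul_cden_le_translate_sub {p : ℝ} (hp : 1 ≤ p) (hp2 : p ≤ 2)
    {f : ℝ → ℂ} (hf : MemW S.A p f) {I : Set ℝ} (hI : MeasurableSet I) (hI0 : I ⊆ Ioi 0)
    {t : ℝ} (ht : 0 < t) (hIt : ∀ x ∈ I, 1 ≤ x * t) :
    ∫⁻ x in I, ENNReal.ofReal (‖S.FT f x‖ * S.cden x)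
      ≤ ENNReal.ofReal S.c₀⁻¹ *
        ∫⁻ x in I, ENNReal.ofReal (‖S.FT (fun y => S.τ t f y - f y) x‖ * S.cden x) := by
  rw [← lintegral_const_mul' _ _ ENNReal.ofReal_ne_top]
  refine lintegral_mono_ae ?_
  filter_upwards [ae_restrict_of_ae_restrict_of_subset hI0 (S.hτ_FT p hp hp2 t f hf),
    ae_restrict_mem hI] with x hτ hx
  rw [← ENNReal.ofReal_mul (inv_nonneg.2 S.hc₀.le), ← mul_assoc]
  gcongr
  · exact S.cden_nonneg x
  · rw [le_inv_mul_iff₀ S.hc₀]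
    exact S.c₀_mul_norm_FT_le_norm_FT_translate_sub ht (hIt x hx) hτ

lemma exists_lintegral_Ioc_norm_FT_mul_cden_le {p γ : ℝ} (hp : 1 < p) (hp2 : p ≤ 2)
    {f : ℝ → ℂ} (hf : MemW S.A p f)
    (hBesov : ∃ C : ℝ, ∀ x > (0 : ℝ), S.omega p f x ≤ C * x ^ γ) :
    ∃ E : ℝ, ∀ a, S.k ≤ a →
      ∫⁻ x in Ioc a (2 * a), ENNReal.ofReal (‖S.FT f x‖ * S.cden x)
        ≤ ENNReal.ofReal (E * a ^ (2 * (S.α + 1) / p - γ)) := by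
  obtain ⟨CB, hCB⟩ := hBesov
  obtain ⟨C, hC, hHY⟩ := S.exists_lintegral_norm_FT_mul_cden_le hp hp2
  refine ⟨S.c₀⁻¹ * (C * CB) * (S.k₂ * 2 ^ (2 * S.α + 1)) ^ (1 / p), fun a ha => ?_⟩
  have ha0 : 0 < a := S.hk.trans_le ha
  have hI0 : Ioc a (2 * a) ⊆ Ioi 0 := fun x hx => ha0.trans hx.1
  have hK : 0 ≤ S.k₂ * 2 ^ (2 * S.α + 1) := mul_nonneg S.hk₂.le (by positivity)
  calc ∫⁻ x in Ioc a (2 * a), ENNReal.ofReal (‖S.FT f x‖ * S.cden x)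
      ≤ ENNReal.ofReal S.c₀⁻¹ * ∫⁻ x in Ioc a (2 * a),
          ENNReal.ofReal (‖S.FT (fun y => S.τ a⁻¹ f y - f y) x‖ * S.cden x) :=
        S.lintegral_norm_FT_mul_cden_le_translate_sub hp.le hp2 hf measurableSet_Ioc hI0
          (inv_pos.2 ha0) fun x hx => (le_mul_inv_iff₀ ha0).2 (by linarith [hx.1])
    _ ≤ ENNReal.ofReal S.c₀⁻¹ * (ENNReal.ofReal (C * (CB * a⁻¹ ^ γ)) *
          ENNReal.ofReal (S.k₂ * 2 ^ (2 * S.α + 1) * a ^ (2 * (S.α + 1))) ^ (1 / p)) := by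
        gcongr
        refine (hHY _ (S.hτ_diff p hp.le _ f hf) _ hI0).trans ?_
        gcongr
        · exact hCB _ (inv_pos.2 ha0)
        · exact S.lintegral_Ioc_cden_le ha
    _ = ENNReal.ofReal (S.c₀⁻¹ * (C * CB) * (S.k₂ * 2 ^ (2 * S.α + 1)) ^ (1 / p) *
          a ^ (2 * (S.α + 1) / p - γ)) := by
        rw [ENNReal.ofReal_rpow_of_nonneg (mul_nonneg hK (by positivity)) (by positivity),
          ← ENNReal.ofReal_mul' (Real.rpow_nonneg (mul_nonneg hK (by positivity)) _),
          ← ENNReal.ofReal_mul (inv_nonneg.2 S.hc₀.le),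
          Real.rpow_sub ha0, Real.inv_rpow ha0.le, Real.mul_rpow hK (by positivity),
          ← Real.rpow_mul ha0.le, mul_one_div]
        congr 1
        ring

end JacobiHypergroup

/-- **Theorem 2 (ii)**: let `1 < p ≤ 2`, let `γ > 2(α+1)/p`, and let `f` belong to
the Besov-type space `B^{p,∞}_{γ,α}` on the Jacobi hypergroup (i.e.
`f ∈ L^p_A(ℝ₊)` with `sup_{x>0} ω_{A,p}(f)(x)/x^γ < ∞`).  Then
`𝓕(f) ∈ L¹_c(ℝ₊)`, that is, `∫₀^∞ |𝓕(f)(x)| dx/|c(x)|² < ∞`. -/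
theorem theorem_two_ii (S : JacobiHypergroup) (p : ℝ) (hp : 1 < p) (hp2 : p ≤ 2)
    (γ : ℝ) (hγ : 2 * (S.α + 1) / p < γ)
    (f : ℝ → ℂ) (hf : MemW S.A p f)
    (hBesov : ∃ C : ℝ, ∀ x > (0 : ℝ), S.omega p f x ≤ C * x ^ γ) :
    ∫⁻ x in Set.Ioi (0 : ℝ),
        ENNReal.ofReal (‖S.FT f x‖ * S.cden x) < ⊤ := by
  obtain ⟨C, -, hHY⟩ := S.exists_lintegral_norm_FT_mul_cden_le hp hp2
  obtain ⟨E, hE⟩ := S.exists_lintegral_Ioc_norm_FT_mul_cden_le hp hp2 hf hBesov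
  rw [← Ioc_union_Ioi_eq_Ioi S.hk.le, lintegral_union measurableSet_Ioi (Ioc_disjoint_Ioi le_rfl)]
  refine ENNReal.add_lt_top.2 ⟨?_, lintegral_Ioi_lt_top_of_dyadic_bound S.hk (sub_neg.2 hγ) hE⟩
  exact (hHY f hf _ Ioc_subset_Ioi_self).trans_lt <| ENNReal.mul_lt_top ENNReal.ofReal_lt_top <|
    ENNReal.rpow_lt_top_of_nonneg (by positivity) (S.lintegral_Ioc_cden_lt_top 0 S.k).ne
end
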